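/- arXiv:2412.00235 — 4 statements merged into one kernel-verified Lean document; each statement's English description precedes it below -/
import Mathlib

section
/- Under the symmetry conditions (i)-(iii), if the powers satisfy p_k > 0 for all k and SINR_k(p) takes the same value for every k ∈ {1,…,N}, then all the powers are equal: p_k = p_j for all k, j. -/
open Finset

/-- SINR of link `k` in a single-channel network with powers `p`, gains `c`,
interferer sets `I` and noise power `σ2`. -/
noncomputable def SINRlink (N : ℕ) (c : Fin N → Fin N → ℝ) (I : Fin N → Finset (Fin N))
    (σ2 : ℝ) (p : Fin N → ℝ) (k : Fin N) : ℝ :=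
  p k * c k k / (∑ i ∈ I k, p i * c i k + σ2)

/-- Under the symmetry conditions, equal SINRs force equal powers. -/
theorem equal_SINR_implies_equal_powers
    (N : ℕ) (c : Fin N → Fin N → ℝ) (I : Fin N → Finset (Fin N)) (σ2 : ℝ)
    (hσ : 0 < σ2)
    (hself : ∀ k, k ∉ I k)
    (hdiag : ∀ k, 0 < c k k)
    (hnonneg : ∀ k, ∀ i ∈ I k, 0 ≤ c i k)
    -- (i) every terminal sees the same number of interferers
    (hcard : ∀ k j, (I k).card = (I j).card)
    -- (ii) all direct gains are equal
    (hdirect : ∀ k j, c k k = c j j)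
    -- (iii) the multisets of interference gains are equal
    (hmulti : ∀ k j, ((I k).val.map fun i => c i k) = ((I j).val.map fun i => c i j))
    (p : Fin N → ℝ) (hppos : ∀ k, 0 < p k)
    (hSINR : ∀ k j, SINRlink N c I σ2 p k = SINRlink N c I σ2 p j) :
    ∀ k j, p k = p j := by
  intro k j
  -- denominators are positive
  have hden : ∀ m : Fin N, 0 < ∑ i ∈ I m, p i * c i m + σ2 := by
    intro m
    have : 0 ≤ ∑ i ∈ I m, p i * c i m :=
      Finset.sum_nonneg fun i hi => mul_nonneg (hppos i).le (hnonneg m i hi)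
    linarith
  set c0 : ℝ := c k k with hc0
  set γ : ℝ := SINRlink N c I σ2 p k with hγ
  have hγpos : 0 < γ := by
    rw [hγ]
    exact div_pos (mul_pos (hppos k) (hdiag k)) (hden k)
  -- fundamental equation
  have key : ∀ m : Fin N, p m * c0 = γ * (∑ i ∈ I m, p i * c i m + σ2) := by
    intro m
    have h := (hSINR k m).symm
    rw [← hγ] at h
    have hd := hden m
    have : p m * c m m / (∑ i ∈ I m, p i * c i m + σ2) = γ := h
    field_simp at this
    rw [hc0, hdirect k m]
    linarith [this]
  -- common interference sum
  set S : ℝ := ∑ i ∈ I k, c i k with hS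
  have hSm : ∀ m : Fin N, ∑ i ∈ I m, c i m = S := by
    intro m
    have := hmulti m k
    rw [hS]
    show ((I m).val.map fun i => c i m).sum = ((I k).val.map fun i => c i k).sum
    rw [this]
  have hSnn : 0 ≤ S := by
    rw [hS]; exact Finset.sum_nonneg fun i hi => hnonneg k i hi
  -- extremes
  obtain ⟨a, -, ha⟩ := Finset.exists_max_image Finset.univ p ⟨k, Finset.mem_univ k⟩
  obtain ⟨b, -, hb⟩ := Finset.exists_min_image Finset.univ p ⟨k, Finset.mem_univ k⟩
  have hab : p a = p b := by
    have hTa : ∑ i ∈ I a, p i * c i a ≤ p a * S := by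
      calc ∑ i ∈ I a, p i * c i a ≤ ∑ i ∈ I a, p a * c i a :=
            Finset.sum_le_sum fun i hi =>
              mul_le_mul_of_nonneg_right (ha i (Finset.mem_univ i)) (hnonneg a i hi)
        _ = p a * S := by rw [← Finset.mul_sum, hSm a]
    have hTb : p b * S ≤ ∑ i ∈ I b, p i * c i b := by
      calc p b * S = ∑ i ∈ I b, p b * c i b := by rw [← Finset.mul_sum, hSm b]
        _ ≤ ∑ i ∈ I b, p i * c i b :=
            Finset.sum_le_sum fun i hi =>
              mul_le_mul_of_nonneg_right (hb i (Finset.mem_univ i)) (hnonneg b i hi)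
    have ea := key a
    have eb := key b
    have hA : p a * c0 ≤ γ * (p a * S + σ2) := by nlinarith
    have hB : γ * (p b * S + σ2) ≤ p b * c0 := by nlinarith
    have hcγS : γ * S < c0 := by
      have hpb := hppos b
      nlinarith
    have hba : p b ≤ p a := le_trans (hb a (Finset.mem_univ a)) (le_refl _)
    nlinarith
  have hall : ∀ m : Fin N, p m = p a := by
    intro m
    have h1 := ha m (Finset.mem_univ m)
    have h2 := hb m (Finset.mem_univ m)
    linarith [hab]
  rw [hall k, hall j]
end

section
/- Assume (i) θ ↦ w_s(θ)·w_g(θ) is monotone nonincreasing on [0, π] and W_{0,0}(x,y) > 0 for all (x,y) ∈ ℝ²; and (ii) for every (i,j) ∈ ℐ, the ratio W_{i,j}(x,y)/W_{0,0}(x,y) is convex in x on [−Δ/2, Δ/2] for each fixed y ∈ [−√3Δ/2, √3Δ/2] and convex in y on [−√3Δ/2, √3Δ/2] for each fixed x ∈ [−Δ/2, Δ/2]. Then SINR(x,y) ≤ SINR(0,0) for every (x,y) ∈ ℝ², i.e., the SINR is maximized by placing the ground terminal directly below its serving satellite. -/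
open Real

/-- Distance from ground point `(x, y, 0)` to satellite `s_{i,j} = (iΔ/2, j√3Δ/2, h)`. -/
noncomputable def Dfun (Δ h : ℝ) (i j : ℤ) (x y : ℝ) : ℝ :=
  Real.sqrt ((x - i * Δ / 2) ^ 2 + (y - j * Real.sqrt 3 * Δ / 2) ^ 2 + h ^ 2)

/-- Off-axis angle `θ_{i,j}(x,y) = arccos(h / D_{i,j}(x,y))`. -/
noncomputable def θfun (Δ h : ℝ) (i j : ℤ) (x y : ℝ) : ℝ :=
  Real.arccos (h / Dfun Δ h i j x y)

/-- Combined beam attenuation `W_{i,j}(x,y) = w_s(θ_{i,j}(x,y))·w_g(θ_{i,j}(x,y))`. -/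
noncomputable def Wfun (ws wg : ℝ → ℝ) (Δ h : ℝ) (i j : ℤ) (x y : ℝ) : ℝ :=
  ws (θfun Δ h i j x y) * wg (θfun Δ h i j x y)

/-- Signal-to-noise ratio at the ground point `(x, y)`, served by satellite `s_{0,0}`. -/
noncomputable def SNR (ws wg : ℝ → ℝ) (Δ h α p σ2 : ℝ) (x y : ℝ) : ℝ :=
  (p / σ2) * Dfun Δ h 0 0 x y ^ (-α) * Wfun ws wg Δ h 0 0 x y

/-- Interference-to-noise ratio at the ground point `(x, y)`: sum over all satellites
`(i,j)` with `i ≡ j (mod 2)` other than `(0,0)`. -/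
noncomputable def INR (ws wg : ℝ → ℝ) (Δ h α p σ2 : ℝ) (x y : ℝ) : ℝ :=
  (p / σ2) * ∑' q : ℤ × ℤ,
    if q.1 % 2 = q.2 % 2 ∧ q ≠ (0, 0) then
      Dfun Δ h q.1 q.2 x y ^ (-α) * Wfun ws wg Δ h q.1 q.2 x y
    else 0

/-- `SINR(x,y) = SNR(x,y) / (INR(x,y) + 1)`. -/
noncomputable def SINR (ws wg : ℝ → ℝ) (Δ h α p σ2 : ℝ) (x y : ℝ) : ℝ :=
  SNR ws wg Δ h α p σ2 x y / (INR ws wg Δ h α p σ2 x y + 1)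
/-!
Translating the ground point by a vector `(mΔ, n√3Δ)` of the constellation's rectangular
sublattice leaves the total received power unchanged; choosing the vector that brings the point
into the cell `[-Δ/2, Δ/2] × [-√3Δ/2, √3Δ/2]` only brings it closer to the serving satellite,
so the serving satellite's share, and with it the SINR, grows. On the cell,
`1 / SINR = Σ_q P_q / P_0 + σ² / (p P_0)`. Each ratio `P_q / P_0 = (D_0 / D_q)^α · W_q / W_0` is a
product of two factors that are comonotone under the reflection `x ↦ -x` and satisfy the
midpoint inequality about `x = 0`; as the constellation is symmetric under that reflection, the
sum is smallest at `x = 0`, where `P_0` is also largest. The same argument in `y` at `x = 0`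
finishes. For the distance factor the midpoint inequality is a polynomial inequality that is
clear unless `(0, y)` is closer to `s_{i,j}` than to `s_{0,0}`, which within the cell happens
only for the four neighbours `(±1, ±1)`.
-/

open Set

noncomputable def rxPower (ws wg : ℝ → ℝ) (Δ h α : ℝ) (i j : ℤ) (x y : ℝ) : ℝ :=
  Dfun Δ h i j x y ^ (-α) * Wfun ws wg Δ h i j x y

noncomputable def interference (ws wg : ℝ → ℝ) (Δ h α x y : ℝ) (q : ℤ × ℤ) : ℝ :=
  if q.1 % 2 = q.2 % 2 ∧ q ≠ (0, 0) then rxPower ws wg Δ h α q.1 q.2 x y else 0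

noncomputable def totalPower (ws wg : ℝ → ℝ) (Δ h α x y : ℝ) : ℝ :=
  ∑' q : ℤ × ℤ, if q.1 % 2 = q.2 % 2 then rxPower ws wg Δ h α q.1 q.2 x y else 0

noncomputable def midpointKey (t c d e : ℝ) : ℝ :=
  (t ^ 2 + (d ^ 2 + e)) * (d ^ 2 + e - c) + 4 * c * d ^ 2

theorem tsum_ite_eq_tsum_ite_of_equiv {ι M : Type*} [AddCommMonoid M] [TopologicalSpace M]
    (e : ι ≃ ι) {P : ι → Prop} [DecidablePred P] {f g : ι → M}
    (hP : ∀ i, P (e i) ↔ P i) (hfg : ∀ i, P i → f (e i) = g i) :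
    ∑' i, (if P i then f i else 0) = ∑' i, (if P i then g i else 0) := by
  rw [← e.tsum_eq]
  refine tsum_congr fun i => ?_
  by_cases hi : P i
  · rw [if_pos ((hP i).2 hi), if_pos hi, hfg i hi]
  · rw [if_neg (mt (hP i).1 hi), if_neg hi]

theorem tsum_le_of_two_mul_le_add {ι : Type*} {f₀ f₁ f₂ : ι → ℝ} (h₀ : Summable f₀)
    (h₁ : Summable f₁) (h₂ : Summable f₂) (hf : ∀ i, 2 * f₀ i ≤ f₁ i + f₂ i)
    (h₂₁ : ∑' i, f₂ i = ∑' i, f₁ i) : ∑' i, f₀ i ≤ ∑' i, f₁ i := by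
  have := Summable.tsum_le_tsum hf (h₀.mul_left 2) (h₁.add h₂)
  rw [tsum_mul_left, h₁.tsum_add h₂, h₂₁] at this
  linarith

theorem two_mul_mul_le_of_comonotone {a₀ a₁ a₂ b₀ b₁ b₂ : ℝ} (ha₀ : 0 ≤ a₀) (hb₀ : 0 ≤ b₀)
    (ha : 2 * a₀ ≤ a₁ + a₂) (hb : 2 * b₀ ≤ b₁ + b₂) (hab : 0 ≤ (a₁ - a₂) * (b₁ - b₂)) :
    2 * (a₀ * b₀) ≤ a₁ * b₁ + a₂ * b₂ := by
  nlinarith [mul_le_mul ha hb (by linarith) (by linarith)]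

theorem ConvexOn.two_mul_le_add_neg {a t : ℝ} {f : ℝ → ℝ} (hf : ConvexOn ℝ (Icc (-a) a) f)
    (ht : t ∈ Icc (-a) a) : 2 * f 0 ≤ f t + f (-t) := by
  have := hf.2 ht (show -t ∈ Icc (-a) a from ⟨by linarith [ht.2], by linarith [ht.1]⟩)
    (by norm_num : (0 : ℝ) ≤ 1 / 2) (by norm_num : (0 : ℝ) ≤ 1 / 2) (by norm_num)
  rw [smul_neg, ← smul_add, add_neg_cancel] at this
  simp only [smul_eq_mul] at this
  linarith

theorem two_mul_rpow_div_le {β t c d e : ℝ} (hβ : 1 ≤ β) (hc : 0 < c) (he : 0 < e)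
    (hK : 0 ≤ midpointKey t c d e) :
    2 * (c / (d ^ 2 + e)) ^ β ≤
      ((t ^ 2 + c) / ((t - d) ^ 2 + e)) ^ β + ((t ^ 2 + c) / ((-t - d) ^ 2 + e)) ^ β := by
  set r₁ := (t ^ 2 + c) / ((t - d) ^ 2 + e)
  set r₂ := (t ^ 2 + c) / ((-t - d) ^ 2 + e)
  -- over the common denominator the difference of the two sides is `2 t² · midpointKey t c d e`
  have hmid : 2 * (c / (d ^ 2 + e)) ≤ r₁ + r₂ := by
    rw [div_add_div _ _ (by positivity) (by positivity), ← mul_div_assoc,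
      div_le_div_iff₀ (by positivity) (by positivity)]
    rw [midpointKey] at hK
    nlinarith [mul_nonneg (sq_nonneg t) hK]
  have hconv := (convexOn_rpow hβ).2 (mem_Ici.2 (by positivity : 0 ≤ r₁))
    (mem_Ici.2 (by positivity : 0 ≤ r₂)) (by norm_num : (0 : ℝ) ≤ 1 / 2)
    (by norm_num : (0 : ℝ) ≤ 1 / 2) (by norm_num)
  simp only [smul_eq_mul] at hconv
  have hmono : (c / (d ^ 2 + e)) ^ β ≤ (1 / 2 * r₁ + 1 / 2 * r₂) ^ β :=
    Real.rpow_le_rpow (by positivity) (by linarith) (by linarith)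
  linarith

theorem mul_div_mul_add_one_le {A S S' Q P : ℝ} (hA : 0 < A) (hS : 0 ≤ S) (hS' : 0 ≤ S')
    (hQP : Q ≤ P) (hSP : S' * Q ≤ S * P) : A * Q / (A * S + 1) ≤ A * P / (A * S' + 1) := by
  rw [div_le_div_iff₀ (by positivity) (by positivity)]
  nlinarith [mul_nonneg (mul_nonneg hA.le hA.le) (sub_nonneg.2 hSP),
    mul_nonneg hA.le (sub_nonneg.2 hQP)]

theorem exists_int_sub_mul_mem_Icc {c : ℝ} (hc : 0 < c) (a : ℝ) :
    ∃ m : ℤ, a - m * c ∈ Icc (-(c / 2)) (c / 2) ∧ (a - m * c) ^ 2 ≤ a ^ 2 := by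
  have habs : |a - round (a / c) * c| = |a / c - round (a / c)| * c := by
    rw [← abs_of_pos hc, ← abs_mul, abs_of_pos hc, sub_mul, div_mul_cancel₀ _ hc.ne']
  refine ⟨round (a / c), ?_, ?_⟩
  · rw [mem_Icc, ← abs_le, habs]
    nlinarith [abs_sub_round (a / c)]
  · rw [sq_le_sq, habs]
    calc |a / c - round (a / c)| * c ≤ |a / c - (0 : ℤ)| * c :=
        mul_le_mul_of_nonneg_right (round_le _ _) hc.le
      _ = |a| := by rw [Int.cast_zero, sub_zero, abs_div, abs_of_pos hc, div_mul_cancel₀ _ hc.ne']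

section Geometry

variable {ws wg : ℝ → ℝ} {Δ h α : ℝ} {i j k l : ℤ} {x y x' y' : ℝ}

theorem Dfun_sq (Δ h : ℝ) (i j : ℤ) (x y : ℝ) :
    Dfun Δ h i j x y ^ 2 = (x - i * Δ / 2) ^ 2 + (y - j * Real.sqrt 3 * Δ / 2) ^ 2 + h ^ 2 :=
  Real.sq_sqrt (by positivity)

theorem Dfun_pos (hh : 0 < h) (Δ : ℝ) (i j : ℤ) (x y : ℝ) : 0 < Dfun Δ h i j x y :=
  Real.sqrt_pos.2 (by positivity)

theorem Dfun_eq_of_sq_eq (hx : (x - i * Δ / 2) ^ 2 = (x' - k * Δ / 2) ^ 2)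
    (hy : (y - j * Real.sqrt 3 * Δ / 2) ^ 2 = (y' - l * Real.sqrt 3 * Δ / 2) ^ 2) :
    Dfun Δ h i j x y = Dfun Δ h k l x' y' := by
  rw [Dfun, Dfun, hx, hy]

theorem Dfun_zero_le_Dfun_zero (hx : x' ^ 2 ≤ x ^ 2) (hy : y' ^ 2 ≤ y ^ 2) :
    Dfun Δ h 0 0 x' y' ≤ Dfun Δ h 0 0 x y :=
  Real.sqrt_le_sqrt (by push_cast; nlinarith)

theorem Wfun_congr (hD : Dfun Δ h i j x y = Dfun Δ h k l x' y') :
    Wfun ws wg Δ h i j x y = Wfun ws wg Δ h k l x' y' := by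
  rw [Wfun, Wfun, θfun, θfun, hD]

theorem Wfun_pos (hW00 : ∀ x y, 0 < Wfun ws wg Δ h 0 0 x y) (i j : ℤ) (x y : ℝ) :
    0 < Wfun ws wg Δ h i j x y := by
  rw [Wfun_congr (Dfun_eq_of_sq_eq (k := 0) (l := 0) (x' := x - i * Δ / 2)
    (y' := y - j * Real.sqrt 3 * Δ / 2) (by push_cast; ring) (by push_cast; ring))]
  exact hW00 _ _

theorem Wfun_anti (hh : 0 < h) (hmono : AntitoneOn (fun θ => ws θ * wg θ) (Icc 0 π))
    (hD : Dfun Δ h i j x y ≤ Dfun Δ h k l x' y') :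
    Wfun ws wg Δ h k l x' y' ≤ Wfun ws wg Δ h i j x y :=
  hmono ⟨Real.arccos_nonneg _, Real.arccos_le_pi _⟩ ⟨Real.arccos_nonneg _, Real.arccos_le_pi _⟩
    (Real.arccos_le_arccos (div_le_div_of_nonneg_left hh.le (Dfun_pos hh Δ i j x y) hD))

theorem rxPower_congr (hD : Dfun Δ h i j x y = Dfun Δ h k l x' y') :
    rxPower ws wg Δ h α i j x y = rxPower ws wg Δ h α k l x' y' := by
  rw [rxPower, rxPower, hD, Wfun_congr hD]

theorem rxPower_pos (hh : 0 < h) (hW00 : ∀ x y, 0 < Wfun ws wg Δ h 0 0 x y)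
    (i j : ℤ) (x y : ℝ) :
    0 < rxPower ws wg Δ h α i j x y :=
  mul_pos (Real.rpow_pos_of_pos (Dfun_pos hh Δ i j x y) _) (Wfun_pos hW00 i j x y)

theorem rxPower_anti (hh : 0 < h) (hα : 0 ≤ α)
    (hmono : AntitoneOn (fun θ => ws θ * wg θ) (Icc 0 π))
    (hW00 : ∀ x y, 0 < Wfun ws wg Δ h 0 0 x y) (hD : Dfun Δ h i j x y ≤ Dfun Δ h k l x' y') :
    rxPower ws wg Δ h α k l x' y' ≤ rxPower ws wg Δ h α i j x y :=
  mul_le_mul (Real.rpow_le_rpow_of_nonpos (Dfun_pos hh Δ i j x y) hD (by linarith))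
    (Wfun_anti hh hmono hD) (Wfun_pos hW00 k l x' y').le
    (Real.rpow_pos_of_pos (Dfun_pos hh Δ i j x y) _).le

theorem rxPower_div_rxPower_zero (hh : 0 < h) (i j : ℤ) (x y : ℝ) :
    rxPower ws wg Δ h α i j x y / rxPower ws wg Δ h α 0 0 x y =
      (Dfun Δ h 0 0 x y / Dfun Δ h i j x y) ^ α *
        (Wfun ws wg Δ h i j x y / Wfun ws wg Δ h 0 0 x y) := by
  rw [rxPower, rxPower, ← div_mul_div_comm, Real.rpow_neg (Dfun_pos hh Δ i j x y).le,
    Real.rpow_neg (Dfun_pos hh Δ 0 0 x y).le, inv_div_inv,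
    Real.div_rpow (Dfun_pos hh Δ 0 0 x y).le (Dfun_pos hh Δ i j x y).le]

theorem Dfun_div_rpow_eq_sq_div_sq_rpow (hh : 0 < h) (i j : ℤ) (x y : ℝ) :
    (Dfun Δ h 0 0 x y / Dfun Δ h i j x y) ^ α =
      (Dfun Δ h 0 0 x y ^ 2 / Dfun Δ h i j x y ^ 2) ^ (α / 2) := by
  rw [← div_pow, ← Real.rpow_natCast,
    ← Real.rpow_mul (div_pos (Dfun_pos hh Δ 0 0 x y) (Dfun_pos hh Δ i j x y)).le]
  ring_nf

end Geometry

theorem sq_eq_one_of_closer_than_center {Δ : ℝ} (hΔ : 0 < Δ) {i j : ℤ} (hij : i % 2 = j % 2)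
    {y : ℝ} (hy : y ^ 2 ≤ (Real.sqrt 3 * Δ / 2) ^ 2)
    (hcl : (i * Δ / 2) ^ 2 + (y - j * Real.sqrt 3 * Δ / 2) ^ 2 < y ^ 2) :
    i ^ 2 = 1 ∧ j ^ 2 = 1 := by
  have hS : Real.sqrt 3 ^ 2 = 3 := Real.sq_sqrt (by norm_num)
  have hy' : |y| ≤ Real.sqrt 3 * Δ / 2 := abs_le_of_sq_le_sq hy (by positivity)
  have hyj : y * j * Real.sqrt 3 ≤ 3 * Δ / 2 * |(j : ℝ)| := by
    calc y * j * Real.sqrt 3 ≤ |y| * |(j : ℝ)| * Real.sqrt 3 := by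
          rw [← abs_mul]; gcongr; exact le_abs_self _
      _ ≤ Real.sqrt 3 * Δ / 2 * |(j : ℝ)| * Real.sqrt 3 := by gcongr
      _ = 3 * Δ / 2 * |(j : ℝ)| := by linear_combination Δ / 2 * |(j : ℝ)| * hS
  have hexp : (i * Δ / 2) ^ 2 + (y - j * Real.sqrt 3 * Δ / 2) ^ 2 - y ^ 2 =
      ((i : ℝ) ^ 2 + 3 * (j : ℝ) ^ 2) * Δ ^ 2 / 4 - y * j * Real.sqrt 3 * Δ := by
    linear_combination (j : ℝ) ^ 2 * Δ ^ 2 / 4 * hS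
  have hreal : ((i : ℝ) ^ 2 + 3 * (j : ℝ) ^ 2) * Δ ^ 2 < 6 * |(j : ℝ)| * Δ ^ 2 := by
    linarith [mul_le_mul_of_nonneg_right hyj hΔ.le]
  have hint : i ^ 2 + 3 * j ^ 2 < 6 * |j| := by
    exact_mod_cast lt_of_mul_lt_mul_right hreal (sq_nonneg Δ)
  have hj : -2 < j ∧ j < 2 := by
    constructor <;> nlinarith [abs_nonneg j, sq_abs j, le_abs_self j, neg_abs_le j, sq_nonneg i]
  have hi : -2 < i ∧ i < 2 := by
    constructor <;> nlinarith [abs_nonneg j, sq_abs j, sq_nonneg (|j| - 1)]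
  obtain ⟨hj₁, hj₂⟩ := hj
  obtain ⟨hi₁, hi₂⟩ := hi
  interval_cases i <;> interval_cases j <;> revert hij hint <;> decide

theorem midpointKey_nonneg_of_le {t c d e : ℝ} (hc : 0 ≤ c) (he : 0 ≤ e) (hce : c ≤ d ^ 2 + e) :
    0 ≤ midpointKey t c d e :=
  add_nonneg (mul_nonneg (by positivity) (by linarith)) (by positivity)

theorem midpointKey_nonneg_of_neighbor {Δ h x y d w : ℝ} (hΔ : 0 < Δ) (hd : d ^ 2 = Δ ^ 2 / 4)
    (hw : w ^ 2 = 3 * Δ ^ 2 / 4) (hx : x ^ 2 ≤ Δ ^ 2 / 4) (hy : y ^ 2 ≤ 3 * Δ ^ 2 / 4)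
    (hcl : d ^ 2 + (y - w) ^ 2 < y ^ 2) :
    0 ≤ midpointKey x (y ^ 2 + h ^ 2) d ((y - w) ^ 2 + h ^ 2) := by
  set s := 2 * y * w - Δ ^ 2 with hs
  have hs₀ : 0 < s := by nlinarith
  have hs₁ : s ≤ Δ ^ 2 / 2 := by nlinarith [sq_nonneg (y - w)]
  have hc : Δ ^ 2 / 3 ≤ y ^ 2 + h ^ 2 := by
    nlinarith [sq_nonneg h, mul_pos hΔ hΔ,
      mul_self_lt_mul_self (by positivity) (by linarith : Δ ^ 2 < 2 * y * w)]
  have hK : midpointKey x (y ^ 2 + h ^ 2) d ((y - w) ^ 2 + h ^ 2) =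
      (y ^ 2 + h ^ 2) * (Δ ^ 2 - s) - x ^ 2 * s + s ^ 2 := by
    rw [midpointKey, hs]
    linear_combination
      (x ^ 2 + 5 * (y ^ 2 + h ^ 2) - 2 * (2 * y * w - Δ ^ 2) + d ^ 2 + w ^ 2 - Δ ^ 2) * hd +
      (x ^ 2 + (y ^ 2 + h ^ 2) - 2 * (2 * y * w - Δ ^ 2) + d ^ 2 + w ^ 2 - Δ ^ 2) * hw
  rw [hK]
  nlinarith [mul_le_mul hc (by linarith : Δ ^ 2 / 2 ≤ Δ ^ 2 - s) (by positivity) (by positivity),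
    mul_le_mul hx hs₁ hs₀.le (by positivity), sq_nonneg s]

theorem midpointKey_nonneg_fst {Δ : ℝ} (hΔ : 0 < Δ) {i j : ℤ} (hij : i % 2 = j % 2) (h : ℝ)
    {x y : ℝ} (hx : x ^ 2 ≤ (Δ / 2) ^ 2) (hy : y ^ 2 ≤ (Real.sqrt 3 * Δ / 2) ^ 2) :
    0 ≤ midpointKey x (y ^ 2 + h ^ 2) (i * Δ / 2) ((y - j * Real.sqrt 3 * Δ / 2) ^ 2 + h ^ 2) := by
  by_cases hcl : (i * Δ / 2) ^ 2 + (y - j * Real.sqrt 3 * Δ / 2) ^ 2 < y ^ 2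
  · obtain ⟨hi, hj⟩ := sq_eq_one_of_closer_than_center hΔ hij hy hcl
    have hS : Real.sqrt 3 ^ 2 = 3 := Real.sq_sqrt (by norm_num)
    have hi' : (i : ℝ) ^ 2 = 1 := by exact_mod_cast hi
    have hj' : (j : ℝ) ^ 2 = 1 := by exact_mod_cast hj
    refine midpointKey_nonneg_of_neighbor hΔ ?_ ?_ (by linarith) (by nlinarith) hcl
    · linear_combination Δ ^ 2 / 4 * hi'
    · linear_combination Δ ^ 2 * Real.sqrt 3 ^ 2 / 4 * hj' + Δ ^ 2 / 4 * hS
  · exact midpointKey_nonneg_of_le (by positivity) (by positivity) (by linarith)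

section Power

variable {ws wg : ℝ → ℝ} {Δ h α : ℝ} {x y : ℝ}

theorem interference_nonneg (hh : 0 < h) (hW00 : ∀ x y, 0 < Wfun ws wg Δ h 0 0 x y)
    (x y : ℝ) (q : ℤ × ℤ) : 0 ≤ interference ws wg Δ h α x y q := by
  unfold interference
  split_ifs
  exacts [(rxPower_pos hh hW00 _ _ _ _).le, le_rfl]

theorem tsum_interference_add_rxPower (hs : Summable (interference ws wg Δ h α x y)) :
    ∑' q, interference ws wg Δ h α x y q + rxPower ws wg Δ h α 0 0 x y =
      totalPower ws wg Δ h α x y := by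
  have hq : (Function.update (fun q : ℤ × ℤ =>
      if q.1 % 2 = q.2 % 2 then rxPower ws wg Δ h α q.1 q.2 x y else 0) (0, 0) 0) =
      interference ws wg Δ h α x y := by
    ext q
    by_cases h0 : q = (0, 0) <;> simp [interference, h0]
  rw [totalPower, Summable.tsum_eq_add_tsum_ite' (f := fun q : ℤ × ℤ =>
    if q.1 % 2 = q.2 % 2 then rxPower ws wg Δ h α q.1 q.2 x y else 0) (0, 0) (hq ▸ hs), add_comm]
  congr 1
  exact tsum_congr fun q => (congrFun hq q).symm.trans (Function.update_apply _ _ _ _)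

theorem totalPower_sub_lattice (m n : ℤ) :
    totalPower ws wg Δ h α x y =
      totalPower ws wg Δ h α (x - m * Δ) (y - n * (Real.sqrt 3 * Δ)) :=
  tsum_ite_eq_tsum_ite_of_equiv (Equiv.addRight (2 * m, 2 * n)) (fun q => by simp)
    fun q _ => rxPower_congr (i := q.1 + 2 * m) (j := q.2 + 2 * n)
      (Dfun_eq_of_sq_eq (by push_cast; ring) (by push_cast; ring))

theorem tsum_interference_neg_fst :
    ∑' q, interference ws wg Δ h α (-x) y q = ∑' q, interference ws wg Δ h α x y q :=
  (tsum_ite_eq_tsum_ite_of_equiv ((Equiv.neg ℤ).prodCongr (Equiv.refl ℤ))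
    (P := fun q : ℤ × ℤ => q.1 % 2 = q.2 % 2 ∧ q ≠ (0, 0))
    (f := fun q => rxPower ws wg Δ h α q.1 q.2 x y)
    (g := fun q => rxPower ws wg Δ h α q.1 q.2 (-x) y)
    (fun q => by simp [Prod.ext_iff])
    fun q _ => rxPower_congr (i := -q.1) (Dfun_eq_of_sq_eq (by push_cast; ring) rfl)).symm

theorem tsum_interference_neg_snd :
    ∑' q, interference ws wg Δ h α x (-y) q = ∑' q, interference ws wg Δ h α x y q :=
  (tsum_ite_eq_tsum_ite_of_equiv ((Equiv.refl ℤ).prodCongr (Equiv.neg ℤ))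
    (P := fun q : ℤ × ℤ => q.1 % 2 = q.2 % 2 ∧ q ≠ (0, 0))
    (f := fun q => rxPower ws wg Δ h α q.1 q.2 x y)
    (g := fun q => rxPower ws wg Δ h α q.1 q.2 x (-y))
    (fun q => by simp [Prod.ext_iff])
    fun q _ => rxPower_congr (j := -q.2) (Dfun_eq_of_sq_eq rfl (by push_cast; ring))).symm

end Power

section SINR

variable {ws wg : ℝ → ℝ} {Δ h α p σ2 : ℝ} {x y x' y' : ℝ}

theorem SINR_eq (ws wg : ℝ → ℝ) (Δ h α p σ2 x y : ℝ) :
    SINR ws wg Δ h α p σ2 x y = p / σ2 * rxPower ws wg Δ h α 0 0 x y /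
      (p / σ2 * ∑' q, interference ws wg Δ h α x y q + 1) := by
  rw [SINR, SNR, INR, rxPower, mul_assoc]
  rfl

theorem SINR_le_SINR (hp : 0 < p) (hσ : 0 < σ2) (hh : 0 < h)
    (hW00 : ∀ x y, 0 < Wfun ws wg Δ h 0 0 x y)
    (hQ : rxPower ws wg Δ h α 0 0 x y ≤ rxPower ws wg Δ h α 0 0 x' y')
    (hS : (∑' q, interference ws wg Δ h α x' y' q) * rxPower ws wg Δ h α 0 0 x y ≤
      (∑' q, interference ws wg Δ h α x y q) * rxPower ws wg Δ h α 0 0 x' y') :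
    SINR ws wg Δ h α p σ2 x y ≤ SINR ws wg Δ h α p σ2 x' y' := by
  rw [SINR_eq, SINR_eq]
  exact mul_div_mul_add_one_le (div_pos hp hσ) (tsum_nonneg (interference_nonneg hh hW00 x y))
    (tsum_nonneg (interference_nonneg hh hW00 x' y')) hQ hS

theorem SINR_le_SINR_sub_lattice (hp : 0 < p) (hσ : 0 < σ2) (hh : 0 < h) (hα : 0 ≤ α)
    (hmono : AntitoneOn (fun θ => ws θ * wg θ) (Icc 0 π))
    (hW00 : ∀ x y, 0 < Wfun ws wg Δ h 0 0 x y)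
    (hsum : ∀ x y, Summable (interference ws wg Δ h α x y)) (m n : ℤ)
    (hx : (x - m * Δ) ^ 2 ≤ x ^ 2) (hy : (y - n * (Real.sqrt 3 * Δ)) ^ 2 ≤ y ^ 2) :
    SINR ws wg Δ h α p σ2 x y ≤
      SINR ws wg Δ h α p σ2 (x - m * Δ) (y - n * (Real.sqrt 3 * Δ)) := by
  have hQ := rxPower_anti (α := α) hh hα hmono hW00 (Dfun_zero_le_Dfun_zero hx hy)
  have htotal := (tsum_interference_add_rxPower (hsum x y)).trans
    ((totalPower_sub_lattice m n).trans (tsum_interference_add_rxPower (hsum _ _)).symm)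
  exact SINR_le_SINR hp hσ hh hW00 hQ (mul_le_mul (by linarith) hQ
    (rxPower_pos hh hW00 0 0 x y).le (tsum_nonneg (interference_nonneg hh hW00 x y)))

theorem rxPower_ratio_midpoint (hh : 0 < h) (hα : 0 ≤ α)
    (hmono : AntitoneOn (fun θ => ws θ * wg θ) (Icc 0 π))
    (hW00 : ∀ x y, 0 < Wfun ws wg Δ h 0 0 x y) {i j : ℤ} {x₀ y₀ x₁ y₁ x₂ y₂ : ℝ}
    (h00 : Dfun Δ h 0 0 x₁ y₁ = Dfun Δ h 0 0 x₂ y₂)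
    (hD : 2 * (Dfun Δ h 0 0 x₀ y₀ / Dfun Δ h i j x₀ y₀) ^ α ≤
      (Dfun Δ h 0 0 x₁ y₁ / Dfun Δ h i j x₁ y₁) ^ α +
        (Dfun Δ h 0 0 x₂ y₂ / Dfun Δ h i j x₂ y₂) ^ α)
    (hW : 2 * (Wfun ws wg Δ h i j x₀ y₀ / Wfun ws wg Δ h 0 0 x₀ y₀) ≤
      Wfun ws wg Δ h i j x₁ y₁ / Wfun ws wg Δ h 0 0 x₁ y₁ +
        Wfun ws wg Δ h i j x₂ y₂ / Wfun ws wg Δ h 0 0 x₂ y₂) :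
    2 * (rxPower ws wg Δ h α i j x₀ y₀ / rxPower ws wg Δ h α 0 0 x₀ y₀) ≤
      rxPower ws wg Δ h α i j x₁ y₁ / rxPower ws wg Δ h α 0 0 x₁ y₁ +
        rxPower ws wg Δ h α i j x₂ y₂ / rxPower ws wg Δ h α 0 0 x₂ y₂ := by
  simp only [rxPower_div_rxPower_zero hh]
  refine two_mul_mul_le_of_comonotone
    (Real.rpow_nonneg (div_pos (Dfun_pos hh Δ 0 0 x₀ y₀) (Dfun_pos hh Δ i j x₀ y₀)).le _)
    (div_pos (Wfun_pos hW00 i j x₀ y₀) (hW00 x₀ y₀)).le hD hW ?_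
  rw [h00, Wfun_congr h00]
  have hD₀ := Dfun_pos hh Δ 0 0 x₂ y₂
  rcases le_total (Dfun Δ h i j x₁ y₁) (Dfun Δ h i j x₂ y₂) with hle | hle
  · apply mul_nonneg <;> rw [sub_nonneg]
    · exact Real.rpow_le_rpow (div_pos hD₀ (Dfun_pos hh Δ i j x₂ y₂)).le
        (div_le_div_of_nonneg_left hD₀.le (Dfun_pos hh Δ i j x₁ y₁) hle) hα
    · exact div_le_div_of_nonneg_right (Wfun_anti hh hmono hle) (hW00 x₂ y₂).le
  · apply mul_nonneg_of_nonpos_of_nonpos <;> rw [sub_nonpos]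
    · exact Real.rpow_le_rpow (div_pos hD₀ (Dfun_pos hh Δ i j x₁ y₁)).le
        (div_le_div_of_nonneg_left hD₀.le (Dfun_pos hh Δ i j x₂ y₂) hle) hα
    · exact div_le_div_of_nonneg_right (Wfun_anti hh hmono hle) (hW00 x₂ y₂).le

theorem SINR_le_SINR_of_midpoint (hp : 0 < p) (hσ : 0 < σ2) (hh : 0 < h) (hα : 0 ≤ α)
    (hmono : AntitoneOn (fun θ => ws θ * wg θ) (Icc 0 π))
    (hW00 : ∀ x y, 0 < Wfun ws wg Δ h 0 0 x y)
    (hsum : ∀ x y, Summable (interference ws wg Δ h α x y)) {x₀ y₀ x₁ y₁ x₂ y₂ : ℝ}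
    (h00 : Dfun Δ h 0 0 x₁ y₁ = Dfun Δ h 0 0 x₂ y₂)
    (h0 : Dfun Δ h 0 0 x₀ y₀ ≤ Dfun Δ h 0 0 x₁ y₁)
    (hS : ∑' q, interference ws wg Δ h α x₂ y₂ q = ∑' q, interference ws wg Δ h α x₁ y₁ q)
    (hmid : ∀ i j : ℤ, i % 2 = j % 2 → (i, j) ≠ (0, 0) →
      2 * (rxPower ws wg Δ h α i j x₀ y₀ / rxPower ws wg Δ h α 0 0 x₀ y₀) ≤
        rxPower ws wg Δ h α i j x₁ y₁ / rxPower ws wg Δ h α 0 0 x₁ y₁ +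
          rxPower ws wg Δ h α i j x₂ y₂ / rxPower ws wg Δ h α 0 0 x₂ y₂) :
    SINR ws wg Δ h α p σ2 x₁ y₁ ≤ SINR ws wg Δ h α p σ2 x₀ y₀ := by
  have hratio : (∑' q, interference ws wg Δ h α x₀ y₀ q) / rxPower ws wg Δ h α 0 0 x₀ y₀ ≤
      (∑' q, interference ws wg Δ h α x₁ y₁ q) / rxPower ws wg Δ h α 0 0 x₁ y₁ := by
    simp only [← tsum_div_const]
    refine tsum_le_of_two_mul_le_add ((hsum _ _).div_const _) ((hsum _ _).div_const _)
      ((hsum x₂ y₂).div_const (rxPower ws wg Δ h α 0 0 x₂ y₂)) (fun q => ?_) ?_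
    · unfold interference
      split_ifs with hq
      · exact hmid q.1 q.2 hq.1 hq.2
      · simp
    · rw [tsum_div_const, tsum_div_const, hS, rxPower_congr h00]
  refine SINR_le_SINR hp hσ hh hW00 (rxPower_anti hh hα hmono hW00 h0) ?_
  rwa [div_le_div_iff₀ (rxPower_pos hh hW00 0 0 x₀ y₀) (rxPower_pos hh hW00 0 0 x₁ y₁)]
    at hratio

theorem SINR_le_SINR_zero_fst (hΔ : 0 < Δ) (hp : 0 < p) (hσ : 0 < σ2) (hh : 0 < h)
    (hα : 2 ≤ α) (hmono : AntitoneOn (fun θ => ws θ * wg θ) (Icc 0 π))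
    (hW00 : ∀ x y, 0 < Wfun ws wg Δ h 0 0 x y)
    (hsum : ∀ x y, Summable (interference ws wg Δ h α x y))
    (hconv : ∀ i j : ℤ, i % 2 = j % 2 → (i, j) ≠ (0, 0) →
      ConvexOn ℝ (Icc (-(Δ / 2)) (Δ / 2))
        (fun x => Wfun ws wg Δ h i j x y / Wfun ws wg Δ h 0 0 x y))
    (hx : x ∈ Icc (-(Δ / 2)) (Δ / 2))
    (hy : y ∈ Icc (-(Real.sqrt 3 * Δ / 2)) (Real.sqrt 3 * Δ / 2)) :
    SINR ws wg Δ h α p σ2 x y ≤ SINR ws wg Δ h α p σ2 0 y := by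
  have hα₀ : 0 ≤ α := by linarith
  refine SINR_le_SINR_of_midpoint hp hσ hh hα₀ hmono hW00 hsum (x₂ := -x) (y₂ := y)
    (Dfun_eq_of_sq_eq (by push_cast; ring) rfl)
    (Dfun_zero_le_Dfun_zero (by simpa using sq_nonneg x) le_rfl)
    tsum_interference_neg_fst fun i j hij hne => ?_
  refine rxPower_ratio_midpoint hh hα₀ hmono hW00 (Dfun_eq_of_sq_eq (by push_cast; ring) rfl) ?_
    ((hconv i j hij hne).two_mul_le_add_neg hx)
  have hsq : ∀ t, Dfun Δ h 0 0 t y ^ 2 = t ^ 2 + (y ^ 2 + h ^ 2) ∧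
      Dfun Δ h i j t y ^ 2 = (t - i * Δ / 2) ^ 2 + ((y - j * Real.sqrt 3 * Δ / 2) ^ 2 + h ^ 2) :=
    fun t => ⟨by rw [Dfun_sq]; push_cast; ring, by rw [Dfun_sq]; ring⟩
  simp only [Dfun_div_rpow_eq_sq_div_sq_rpow hh, (hsq _).1, (hsq _).2, neg_sq, zero_sub,
    zero_pow two_ne_zero, zero_add]
  exact two_mul_rpow_div_le (by linarith) (by positivity) (by positivity)
    (midpointKey_nonneg_fst hΔ hij h (sq_le_sq' hx.1 hx.2) (sq_le_sq' hy.1 hy.2))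

theorem SINR_le_SINR_zero_snd (hp : 0 < p) (hσ : 0 < σ2) (hh : 0 < h) (hα : 2 ≤ α)
    (hmono : AntitoneOn (fun θ => ws θ * wg θ) (Icc 0 π))
    (hW00 : ∀ x y, 0 < Wfun ws wg Δ h 0 0 x y)
    (hsum : ∀ x y, Summable (interference ws wg Δ h α x y))
    (hconv : ∀ i j : ℤ, i % 2 = j % 2 → (i, j) ≠ (0, 0) →
      ConvexOn ℝ (Icc (-(Real.sqrt 3 * Δ / 2)) (Real.sqrt 3 * Δ / 2))
        (fun y => Wfun ws wg Δ h i j 0 y / Wfun ws wg Δ h 0 0 0 y))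
    (hy : y ∈ Icc (-(Real.sqrt 3 * Δ / 2)) (Real.sqrt 3 * Δ / 2)) :
    SINR ws wg Δ h α p σ2 0 y ≤ SINR ws wg Δ h α p σ2 0 0 := by
  have hα₀ : 0 ≤ α := by linarith
  refine SINR_le_SINR_of_midpoint hp hσ hh hα₀ hmono hW00 hsum (x₂ := 0) (y₂ := -y)
    (Dfun_eq_of_sq_eq rfl (by push_cast; ring))
    (Dfun_zero_le_Dfun_zero le_rfl (by simpa using sq_nonneg y))
    tsum_interference_neg_snd fun i j hij hne => ?_
  refine rxPower_ratio_midpoint hh hα₀ hmono hW00 (Dfun_eq_of_sq_eq rfl (by push_cast; ring)) ?_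
    ((hconv i j hij hne).two_mul_le_add_neg hy)
  have hsq : ∀ t, Dfun Δ h 0 0 0 t ^ 2 = t ^ 2 + h ^ 2 ∧
      Dfun Δ h i j 0 t ^ 2 = (t - j * Real.sqrt 3 * Δ / 2) ^ 2 + ((i * Δ / 2) ^ 2 + h ^ 2) :=
    fun t => ⟨by rw [Dfun_sq]; push_cast; ring, by rw [Dfun_sq]; ring⟩
  simp only [Dfun_div_rpow_eq_sq_div_sq_rpow hh, (hsq _).1, (hsq _).2, neg_sq, zero_sub,
    zero_pow two_ne_zero, zero_add]
  exact two_mul_rpow_div_le (by linarith) (by positivity) (by positivity)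
    (midpointKey_nonneg_of_le (by positivity) (by positivity)
      (by linarith [sq_nonneg (j * Real.sqrt 3 * Δ / 2), sq_nonneg (i * Δ / 2)]))

end SINR

theorem sinr_maximized_below_satellite_general
    (ws wg : ℝ → ℝ) (Δ h α p σ2 : ℝ)
    (hΔ : 0 < Δ) (hh : 0 < h) (hα : 2 ≤ α) (hp : 0 < p) (hσ : 0 < σ2)
    (hsum : ∀ x y : ℝ, Summable fun q : ℤ × ℤ =>
      if q.1 % 2 = q.2 % 2 ∧ q ≠ (0, 0) then
        Dfun Δ h q.1 q.2 x y ^ (-α) * Wfun ws wg Δ h q.1 q.2 x y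
      else 0)
    -- (i) θ ↦ w_s(θ)·w_g(θ) is nonincreasing on [0, π] and W₀₀ > 0 everywhere
    (hmono : AntitoneOn (fun θ => ws θ * wg θ) (Set.Icc (0 : ℝ) π))
    (hW00 : ∀ x y : ℝ, 0 < Wfun ws wg Δ h 0 0 x y)
    -- (ii) the ratio W_{i,j}/W_{0,0} is convex in x and in y on the central cell
    (hconvx : ∀ i j : ℤ, i % 2 = j % 2 → (i, j) ≠ ((0 : ℤ), (0 : ℤ)) →
      ∀ y ∈ Set.Icc (-(Real.sqrt 3 * Δ / 2)) (Real.sqrt 3 * Δ / 2),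
        ConvexOn ℝ (Set.Icc (-(Δ / 2)) (Δ / 2))
          (fun x => Wfun ws wg Δ h i j x y / Wfun ws wg Δ h 0 0 x y))
    (hconvy : ∀ i j : ℤ, i % 2 = j % 2 → (i, j) ≠ ((0 : ℤ), (0 : ℤ)) →
      ∀ x ∈ Set.Icc (-(Δ / 2)) (Δ / 2),
        ConvexOn ℝ (Set.Icc (-(Real.sqrt 3 * Δ / 2)) (Real.sqrt 3 * Δ / 2))
          (fun y => Wfun ws wg Δ h i j x y / Wfun ws wg Δ h 0 0 x y)) :
    ∀ x y : ℝ, SINR ws wg Δ h α p σ2 x y ≤ SINR ws wg Δ h α p σ2 0 0 := by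
  intro x y
  obtain ⟨m, hxm, hxm₂⟩ := exists_int_sub_mul_mem_Icc hΔ x
  obtain ⟨n, hyn, hyn₂⟩ := exists_int_sub_mul_mem_Icc (by positivity : 0 < Real.sqrt 3 * Δ) y
  calc SINR ws wg Δ h α p σ2 x y
      ≤ SINR ws wg Δ h α p σ2 (x - m * Δ) (y - n * (Real.sqrt 3 * Δ)) :=
        SINR_le_SINR_sub_lattice hp hσ hh (by linarith) hmono hW00 hsum m n hxm₂ hyn₂
    _ ≤ SINR ws wg Δ h α p σ2 0 (y - n * (Real.sqrt 3 * Δ)) :=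
        SINR_le_SINR_zero_fst hΔ hp hσ hh hα hmono hW00 hsum
          (fun i j hij hne => hconvx i j hij hne _ hyn) hxm hyn
    _ ≤ SINR ws wg Δ h α p σ2 0 0 :=
        SINR_le_SINR_zero_snd hp hσ hh hα hmono hW00 hsum
          (fun i j hij hne => hconvy i j hij hne 0 ⟨by linarith, by linarith⟩) hyn

/-- Proposition 2: under monotonicity of the combined beam gain and convexity of the
beam-gain ratios, the SINR is maximized by placing the terminal directly below its
serving satellite. -/
theorem sinr_maximized_below_satellite
    (ws wg : ℝ → ℝ) (Δ h α p σ2 : ℝ)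
    (hΔ : 0 < Δ) (hh : 0 < h) (hα : 2 ≤ α) (hp : 0 < p) (hσ : 0 < σ2)
    (hwsnn : ∀ θ ∈ Set.Icc (0 : ℝ) π, 0 ≤ ws θ)
    (hwgnn : ∀ θ ∈ Set.Icc (0 : ℝ) π, 0 ≤ wg θ)
    (hsum : ∀ x y : ℝ, Summable fun q : ℤ × ℤ =>
      if q.1 % 2 = q.2 % 2 ∧ q ≠ (0, 0) then
        Dfun Δ h q.1 q.2 x y ^ (-α) * Wfun ws wg Δ h q.1 q.2 x y
      else 0)
    -- (i) θ ↦ w_s(θ)·w_g(θ) is nonincreasing on [0, π] and W₀₀ > 0 everywhere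
    (hmono : AntitoneOn (fun θ => ws θ * wg θ) (Set.Icc (0 : ℝ) π))
    (hW00 : ∀ x y : ℝ, 0 < Wfun ws wg Δ h 0 0 x y)
    -- (ii) the ratio W_{i,j}/W_{0,0} is convex in x and in y on the central cell
    (hconvx : ∀ i j : ℤ, i % 2 = j % 2 → (i, j) ≠ ((0 : ℤ), (0 : ℤ)) →
      ∀ y ∈ Set.Icc (-(Real.sqrt 3 * Δ / 2)) (Real.sqrt 3 * Δ / 2),
        ConvexOn ℝ (Set.Icc (-(Δ / 2)) (Δ / 2))
          (fun x => Wfun ws wg Δ h i j x y / Wfun ws wg Δ h 0 0 x y))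
    (hconvy : ∀ i j : ℤ, i % 2 = j % 2 → (i, j) ≠ ((0 : ℤ), (0 : ℤ)) →
      ∀ x ∈ Set.Icc (-(Δ / 2)) (Δ / 2),
        ConvexOn ℝ (Set.Icc (-(Real.sqrt 3 * Δ / 2)) (Real.sqrt 3 * Δ / 2))
          (fun y => Wfun ws wg Δ h i j x y / Wfun ws wg Δ h 0 0 x y)) :
    ∀ x y : ℝ, SINR ws wg Δ h α p σ2 x y ≤ SINR ws wg Δ h α p σ2 0 0 :=
  sinr_maximized_below_satellite_general ws wg Δ h α p σ2 hΔ hh hα hp hσ hsum hmono hW00 hconvx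
    hconvy
end

section
/- Let Δ > 0, h > 0, let a, b be integers with (a,b) ≠ (0,0), and let x ∈ [−Δ/2, Δ/2], y ∈ [−√3Δ/2, √3Δ/2]. Set ℓ = y² + h² and m = (y − √3Δb)² + h². Then (x − Δa)²·(Δ²a² + 2Δax + 3ℓ) + m·(m − ℓ + 2Δ²a² − 3x²) ≥ 0. -/
set_option maxHeartbeats 1000000


/-- The algebraic inequality equivalent to convexity in `x` of the squared distance
ratio for the even-index satellites of the hexagonal lattice: with `ℓ = y² + h²` and
`m = (y − √3Δb)² + h²`,
`(x − Δa)²·(Δ²a² + 2Δax + 3ℓ) + m·(m − ℓ + 2Δ²a² − 3x²) ≥ 0`. -/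
theorem convexity_algebraic_inequality (Δ h : ℝ) (hΔ : 0 < Δ) (hh : 0 < h)
    (a b : ℤ) (hab : (a, b) ≠ ((0 : ℤ), (0 : ℤ)))
    (x y : ℝ) (hx : x ∈ Set.Icc (-(Δ / 2)) (Δ / 2))
    (hy : y ∈ Set.Icc (-(Real.sqrt 3 * Δ / 2)) (Real.sqrt 3 * Δ / 2)) :
    0 ≤ (x - Δ * a) ^ 2 * (Δ ^ 2 * (a : ℝ) ^ 2 + 2 * Δ * a * x + 3 * (y ^ 2 + h ^ 2)) +
        ((y - Real.sqrt 3 * Δ * b) ^ 2 + h ^ 2) *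
          (((y - Real.sqrt 3 * Δ * b) ^ 2 + h ^ 2) - (y ^ 2 + h ^ 2) +
            2 * Δ ^ 2 * (a : ℝ) ^ 2 - 3 * x ^ 2) := by
  obtain ⟨hx1, hx2⟩ := hx
  obtain ⟨hy1, hy2⟩ := hy
  have hc3 : (Real.sqrt 3 * Δ) ^ 2 = 3 * Δ ^ 2 := by
    rw [mul_pow, Real.sq_sqrt (by norm_num : (3:ℝ) ≥ 0)]
  have hcpos : 0 < Real.sqrt 3 * Δ := by positivity
  set c := Real.sqrt 3 * Δ with hc
  have hx' : x ^ 2 ≤ Δ ^ 2 / 4 := by nlinarith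
  have hy' : y ^ 2 ≤ c ^ 2 / 4 := by nlinarith
  by_cases hb : b = 0
  · -- then a ≠ 0
    have ha : a ≠ 0 := by
      intro h0; exact hab (by simp [h0, hb])
    have ha1 : 1 ≤ (a : ℝ) ^ 2 := by
      have : 1 ≤ a ^ 2 := by
        have h1 := Int.one_le_abs (by simpa using ha)
        nlinarith [sq_abs a, h1]
      exact_mod_cast this
    subst hb
    push_cast
    have h1 : 0 ≤ Δ ^ 2 * (a : ℝ) ^ 2 + 2 * Δ * a * x := by
      nlinarith [sq_nonneg (Δ * (a:ℝ) + 2 * x)]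
    have h2 : 0 ≤ (y ^ 2 + h ^ 2) * (2 * Δ ^ 2 * (a : ℝ) ^ 2 - 3 * x ^ 2) := by
      apply mul_nonneg (by positivity)
      nlinarith
    nlinarith [mul_nonneg (sq_nonneg (x - Δ * (a:ℝ)))
      (by nlinarith [sq_nonneg y, sq_nonneg h] : 0 ≤ Δ ^ 2 * (a : ℝ) ^ 2 + 2 * Δ * a * x + 3 * (y ^ 2 + h ^ 2))]
  · -- b ≠ 0
    have hB : c ^ 2 / 4 ≤ (y - c * b) ^ 2 := by
      rcases le_or_gt 1 b with hb1 | hb1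
      · have hb1' : (1 : ℝ) ≤ (b : ℝ) := by exact_mod_cast hb1
        have hcb : c ≤ c * b := by nlinarith
        nlinarith
      · have hb1' : (b : ℝ) ≤ -1 := by
          have : b ≤ -1 := by omega
          exact_mod_cast this
        have hcb : c * b ≤ -c := by nlinarith
        nlinarith
    have hml : y ^ 2 ≤ (y - c * b) ^ 2 := le_trans hy' hB
    by_cases ha : a = 0
    · subst ha
      push_cast
      have h2 : 0 ≤ ((y - c * b) ^ 2 + h ^ 2) - (y ^ 2 + h ^ 2) := by linarith
      have h3 : 0 ≤ ((y - c * b) ^ 2 + h ^ 2) - 3 * x ^ 2 := by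
        nlinarith [hB, hx', sq_nonneg h]
      nlinarith [mul_nonneg h2 h3]
    · have ha1 : 1 ≤ (a : ℝ) ^ 2 := by
        have : 1 ≤ a ^ 2 := by
          have h1 := Int.one_le_abs (by simpa using ha)
          nlinarith [sq_abs a, h1]
        exact_mod_cast this
      have h1 : 0 ≤ Δ ^ 2 * (a : ℝ) ^ 2 + 2 * Δ * a * x := by
        nlinarith [sq_nonneg (Δ * (a:ℝ) + 2 * x)]
      have hterm1 : 0 ≤ (x - Δ * a) ^ 2 *
          (Δ ^ 2 * (a : ℝ) ^ 2 + 2 * Δ * a * x + 3 * (y ^ 2 + h ^ 2)) := by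
        apply mul_nonneg (sq_nonneg _)
        nlinarith [sq_nonneg y, sq_nonneg h]
      have hterm2 : 0 ≤ ((y - c * b) ^ 2 + h ^ 2) *
          (((y - c * b) ^ 2 + h ^ 2) - (y ^ 2 + h ^ 2) + 2 * Δ ^ 2 * (a : ℝ) ^ 2 - 3 * x ^ 2) := by
        apply mul_nonneg (by positivity)
        nlinarith
      linarith
end

section
/- For every real T ≥ 0, the number of pairs (i, j) ∈ ℤ × ℤ with i ≥ 0 and i² + 3j² ≤ T² is at least π·T²/(2·√3) − T − 1. -/
/-!
Slice the half-ellipse by the vertical lines `i = 0, 1, …, ⌊T⌋`. The slice at `i` contains the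
`2⌊√((T² - i²)/3)⌋ + 1 ≥ (2/√3)·√(T² - i²) - 1` integers `j` with `|j| ≤ √((T² - i²)/3)`.
Since `x ↦ √(T² - x²)` is antitone on `[0, T]`, its values at `0, …, ⌊T⌋` dominate its integral
over `[0, T]`, which is the quarter-disc area `πT²/4`; the `⌊T⌋ + 1 ≤ T + 1` error terms give
the rest.
-/

open Real Finset

lemma integral_sqrt_one_sub_sq_zero_one : ∫ x in (0 : ℝ)..1, √(1 - x ^ 2) = π / 4 := by
  have hcont : Continuous fun x : ℝ => √(1 - x ^ 2) := by fun_prop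
  have hsymm : ∫ x in (-1 : ℝ)..0, √(1 - x ^ 2) = ∫ x in (0 : ℝ)..1, √(1 - x ^ 2) := by
    have h := intervalIntegral.integral_comp_neg (a := 0) (b := 1) fun x => √(1 - x ^ 2)
    simp only [neg_sq, neg_zero] at h
    exact h.symm
  have hsplit := intervalIntegral.integral_add_adjacent_intervals (μ := MeasureTheory.volume)
    (hcont.intervalIntegrable (-1) 0) (hcont.intervalIntegrable 0 1)
  rw [integral_sqrt_one_sub_sq, hsymm] at hsplit
  linarith

lemma integral_sqrt_sq_sub_sq {r : ℝ} (hr : 0 ≤ r) :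
    ∫ x in (0 : ℝ)..r, √(r ^ 2 - x ^ 2) = π * r ^ 2 / 4 := by
  rcases hr.eq_or_lt with rfl | hr
  · simp
  have hscale (x : ℝ) : √(r ^ 2 - x ^ 2) = r * √(1 - (x / r) ^ 2) := calc
    √(r ^ 2 - x ^ 2) = √(r ^ 2 * (1 - (x / r) ^ 2)) := by congr 1; field_simp
    _ = r * √(1 - (x / r) ^ 2) := by rw [sqrt_mul (sq_nonneg r), sqrt_sq hr.le]
  simp_rw [hscale]
  rw [intervalIntegral.integral_const_mul,
    intervalIntegral.integral_comp_div (fun u => √(1 - u ^ 2)) hr.ne', zero_div,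
    div_self hr.ne', smul_eq_mul, integral_sqrt_one_sub_sq_zero_one]
  ring

lemma pi_mul_sq_div_four_le_sum_sqrt {r : ℝ} (hr : 0 ≤ r) :
    π * r ^ 2 / 4 ≤ ∑ i ∈ range (⌊r⌋₊ + 1), √(r ^ 2 - i ^ 2) := by
  have hanti : AntitoneOn (fun x : ℝ => √(r ^ 2 - x ^ 2)) (Set.Icc 0 (0 + ↑(⌊r⌋₊ + 1))) :=
    fun x hx y _ hxy => sqrt_le_sqrt (by nlinarith [hx.1])
  calc π * r ^ 2 / 4 = ∫ x in (0 : ℝ)..r, √(r ^ 2 - x ^ 2) := (integral_sqrt_sq_sub_sq hr).symm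
    _ ≤ ∫ x in (0 : ℝ)..↑(⌊r⌋₊ + 1), √(r ^ 2 - x ^ 2) := by
      refine intervalIntegral.integral_mono_interval le_rfl hr ?_ ?_ ?_
      · push_cast; exact (Nat.lt_floor_add_one r).le
      · exact Filter.Eventually.of_forall fun _ => sqrt_nonneg _
      · exact (by fun_prop : Continuous fun x : ℝ => √(r ^ 2 - x ^ 2)).intervalIntegrable _ _
    _ ≤ ∑ i ∈ range (⌊r⌋₊ + 1), √(r ^ 2 - i ^ 2) := by simpa using hanti.integral_le_sum

lemma two_mul_sub_one_le_card_Icc_floor (x : ℝ) :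
    2 * x - 1 ≤ (#(Icc (-(⌊x⌋₊ : ℤ)) ⌊x⌋₊) : ℝ) := by
  have hcard : #(Icc (-(⌊x⌋₊ : ℤ)) ⌊x⌋₊) = 2 * ⌊x⌋₊ + 1 := by rw [Int.card_Icc]; omega
  rw [hcard]
  push_cast
  linarith [Nat.sub_one_lt_floor x]

lemma sq_le_sq_of_mem_Icc_floor {x : ℝ} (hx : 0 ≤ x) {j : ℤ}
    (hj : j ∈ Icc (-(⌊x⌋₊ : ℤ)) ⌊x⌋₊) : (j : ℝ) ^ 2 ≤ x ^ 2 := by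
  rw [mem_Icc] at hj
  have hfloor : (⌊x⌋₊ : ℝ) ≤ x := Nat.floor_le hx
  have hlo : -(⌊x⌋₊ : ℝ) ≤ j := by exact_mod_cast hj.1
  have hhi : (j : ℝ) ≤ ⌊x⌋₊ := by exact_mod_cast hj.2
  exact sq_le_sq' (by linarith) (by linarith)

lemma Int.abs_le_ceil_of_sq_le {k : ℤ} {R : ℝ} (hk : (k : ℝ) ^ 2 ≤ R) : |k| ≤ ⌈R⌉ := by
  have hsq : (|k| : ℝ) ≤ (k : ℝ) ^ 2 := by
    exact_mod_cast (sq_abs k ▸ Int.le_self_sq |k|)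
  exact_mod_cast (by linarith [Int.le_ceil R] : (|k| : ℝ) ≤ ⌈R⌉)

lemma finite_setOf_sq_add_three_mul_sq_le (R : ℝ) :
    {q : ℤ × ℤ | (q.1 : ℝ) ^ 2 + 3 * (q.2 : ℝ) ^ 2 ≤ R}.Finite := by
  refine (Set.finite_Icc (-⌈R⌉, -⌈R⌉) (⌈R⌉, ⌈R⌉)).subset fun q (hq : _ ≤ R) => ?_
  have h1 := abs_le.mp <| Int.abs_le_ceil_of_sq_le (k := q.1) (R := R) <| by
    nlinarith [sq_nonneg (q.2 : ℝ)]
  have h2 := abs_le.mp <| Int.abs_le_ceil_of_sq_le (k := q.2) (R := R) <| by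
    nlinarith [sq_nonneg (q.1 : ℝ)]
  exact ⟨⟨h1.1, h2.1⟩, ⟨h1.2, h2.2⟩⟩

lemma card_biUnion_singleton_product {α β γ : Type*} [DecidableEq β] [DecidableEq γ]
    {f : α → β} (hf : Function.Injective f) (s : Finset α) (t : α → Finset γ) :
    #(s.biUnion fun a => {f a} ×ˢ t a) = ∑ a ∈ s, #(t a) := by
  rw [card_biUnion fun a _ b _ hab => disjoint_product.mpr <| .inl <|
    disjoint_singleton.mpr (hf.ne hab)]
  simp

lemma sum_card_columns_le_ncard {T : ℝ} (hT : 0 ≤ T) :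
    ∑ i ∈ range (⌊T⌋₊ + 1),
        (#(Icc (-(⌊√((T ^ 2 - i ^ 2) / 3)⌋₊ : ℤ)) ⌊√((T ^ 2 - i ^ 2) / 3)⌋₊) : ℝ) ≤
      {q : ℤ × ℤ | 0 ≤ q.1 ∧ (q.1 : ℝ) ^ 2 + 3 * (q.2 : ℝ) ^ 2 ≤ T ^ 2}.ncard := by
  set column : ℕ → Finset ℤ := fun i =>
    Icc (-(⌊√((T ^ 2 - i ^ 2) / 3)⌋₊ : ℤ)) ⌊√((T ^ 2 - i ^ 2) / 3)⌋₊
  have hsub : ↑((range (⌊T⌋₊ + 1)).biUnion fun i => {(i : ℤ)} ×ˢ column i) ⊆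
      {q : ℤ × ℤ | 0 ≤ q.1 ∧ (q.1 : ℝ) ^ 2 + 3 * (q.2 : ℝ) ^ 2 ≤ T ^ 2} := by
    intro q hq
    simp only [coe_biUnion, mem_coe, Set.mem_iUnion, mem_product, mem_singleton,
      exists_prop] at hq
    obtain ⟨i, hi, hq1, hq2⟩ := hq
    have hiT : (i : ℝ) ≤ T :=
      (Nat.cast_le.mpr (Nat.lt_succ_iff.mp (mem_range.mp hi))).trans (Nat.floor_le hT)
    have hj := sq_le_sq_of_mem_Icc_floor (sqrt_nonneg _) hq2
    rw [sq_sqrt (by nlinarith [(Nat.cast_nonneg i : (0 : ℝ) ≤ i)])] at hj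
    refine ⟨hq1 ▸ Int.natCast_nonneg i, ?_⟩
    rw [hq1]
    push_cast
    linarith
  rw [← Nat.cast_sum, ← card_biUnion_singleton_product (Nat.cast_injective (R := ℤ)),
    ← Set.ncard_coe_finset]
  exact Nat.cast_le.mpr <| Set.ncard_le_ncard hsub
    ((finite_setOf_sq_add_three_mul_sq_le (T ^ 2)).subset fun q hq => hq.2)

/-- Lattice-point counting bound: for `T ≥ 0`, the number of pairs `(i, j) ∈ ℤ × ℤ`
with `i ≥ 0` and `i² + 3j² ≤ T²` is at least `π·T²/(2√3) − T − 1`. -/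
theorem lattice_count_lower_bound (T : ℝ) (hT : 0 ≤ T) :
    Real.pi * T ^ 2 / (2 * Real.sqrt 3) - T - 1 ≤
      (({q : ℤ × ℤ | 0 ≤ q.1 ∧ (q.1 : ℝ) ^ 2 + 3 * (q.2 : ℝ) ^ 2 ≤ T ^ 2}.ncard : ℝ)) := by
  set N := ⌊T⌋₊
  have hN : (N : ℝ) ≤ T := Nat.floor_le hT
  calc π * T ^ 2 / (2 * √3) - T - 1
      ≤ 2 / √3 * ∑ i ∈ range (N + 1), √(T ^ 2 - i ^ 2) - (N + 1) := by
        have := mul_le_mul_of_nonneg_left (pi_mul_sq_div_four_le_sum_sqrt hT)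
          (by positivity : (0 : ℝ) ≤ 2 / √3)
        have : 2 / √3 * (π * T ^ 2 / 4) = π * T ^ 2 / (2 * √3) := by field_simp; ring
        linarith
    _ = ∑ i ∈ range (N + 1), (2 * √((T ^ 2 - i ^ 2) / 3) - 1) := by
        rw [sum_sub_distrib, mul_sum]
        simp only [sum_const, card_range, nsmul_eq_mul, mul_one, Nat.cast_add, Nat.cast_one]
        congr 1
        refine sum_congr rfl fun i _ => ?_
        rw [sqrt_div' _ zero_le_three]
        ring
    _ ≤ _ := (sum_le_sum fun i _ => two_mul_sub_one_le_card_Icc_floor _).trans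
        (sum_card_columns_le_ncard hT)
end
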